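/- arXiv:2009.00685 — 5 statements merged into one kernel-verified Lean document; each statement's English description precedes it below -/
import Mathlib

section
/- Let m ≥ 1, let W be a row-stochastic m × m real matrix, and let A be an absorbing set of states for W. Assume that from every state i there exists some n ≥ 1 with ∑_{a ∈ A} (W^n) i a > 0. Then there exist N ≥ 1 and ε > 0 such that for every state i, ∑_{a ∈ A} (W^N) i a ≥ ε (the absorption probability within N steps is uniformly bounded below). -/
theorem uniform_absorption_lower_bound
    (m : ℕ) (hm : 1 ≤ m) (W : Matrix (Fin m) (Fin m) ℝ)
    (hnonneg : ∀ i j, 0 ≤ W i j) (hrow : ∀ i, ∑ j, W i j = 1)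
    (A : Finset (Fin m)) (habs : ∀ a ∈ A, W a a = 1)
    (hreach : ∀ i, ∃ n, 1 ≤ n ∧ 0 < ∑ a ∈ A, (W ^ n) i a) :
    ∃ N, 1 ≤ N ∧ ∃ ε > (0 : ℝ), ∀ i, ε ≤ ∑ a ∈ A, (W ^ N) i a := by
  -- powers have nonnegative entries
  have hpow : ∀ n, ∀ i j, 0 ≤ (W ^ n) i j := by
    intro n
    induction n with
    | zero => intro i j; simp [Matrix.one_apply]; positivity
    | succ n ih =>
      intro i j
      rw [pow_succ, Matrix.mul_apply]
      exact Finset.sum_nonneg fun k _ => mul_nonneg (ih i k) (hnonneg k j)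
  -- monotonicity in n of absorption probability
  have hstep : ∀ n i, ∑ a ∈ A, (W ^ n) i a ≤ ∑ a ∈ A, (W ^ (n + 1)) i a := by
    intro n i
    apply Finset.sum_le_sum
    intro a ha
    rw [pow_succ, Matrix.mul_apply]
    calc (W ^ n) i a = (W ^ n) i a * W a a := by rw [habs a ha, mul_one]
    _ ≤ ∑ j, (W ^ n) i j * W j a := by
        apply Finset.single_le_sum (f := fun j => (W ^ n) i j * W j a)
        · intro j _; exact mul_nonneg (hpow n i j) (hnonneg j a)
        · exact Finset.mem_univ a
  have hmono : ∀ n k, n ≤ k → ∀ i, ∑ a ∈ A, (W ^ n) i a ≤ ∑ a ∈ A, (W ^ k) i a := by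
    intro n k hnk i
    induction k with
    | zero => simp_all
    | succ k ih =>
      rcases Nat.lt_or_ge n (k + 1) with h | h
      · exact le_trans (ih (Nat.lt_succ_iff.mp h)) (hstep k i)
      · have : n = k + 1 := le_antisymm hnk h
        subst this; exact le_refl _
  choose nf hnf1 hnf2 using hreach
  set N := Finset.univ.sup nf + 1 with hN
  refine ⟨N, by omega, ?_⟩
  have hall : ∀ i, 0 < ∑ a ∈ A, (W ^ N) i a := by
    intro i
    have hle : nf i ≤ N := le_trans (Finset.le_sup (Finset.mem_univ i)) (Nat.le_succ _)
    exact lt_of_lt_of_le (hnf2 i) (hmono _ _ hle i)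
  have hne : (Finset.univ : Finset (Fin m)).Nonempty := by
    refine Finset.univ_nonempty_iff.mpr ?_
    exact ⟨⟨0, hm⟩⟩
  obtain ⟨i₀, _, hmin⟩ := Finset.exists_min_image Finset.univ (fun i => ∑ a ∈ A, (W ^ N) i a) hne
  exact ⟨_, hall i₀, fun i => hmin i (Finset.mem_univ i)⟩
end

section
/- Every row-stochastic m × m real matrix W with m ≥ 1 admits a stationary distribution: there exists a vector π : Fin m → ℝ with π i ≥ 0 for all i, ∑_i π i = 1, and ∑_i π i · W i j = π j for every j (i.e. πᵀ W = πᵀ). -/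
/-!
Since `W *ᵥ 1 = 1`, the matrix `1 - W` is singular, so some `v ≠ 0` satisfies `v ᵥ* W = v`.
Then `|v|` is again a left fixed vector: entrywise `|v| ≤ |v| ᵥ* W` by the triangle inequality,
and both sides have the same total because the rows of `W` sum to `1`. Normalizing `|v|` gives `π`.
-/

open Finset

namespace Matrix

variable {R n : Type*} [Fintype n] [DecidableEq n] {M : Matrix n n R}

theorem exists_ne_zero_vecMul_eq_self [CommRing R] [IsDomain R] [Nonempty n] (hM : M *ᵥ 1 = 1) :
    ∃ v ≠ 0, v ᵥ* M = v := by
  have hdet : (1 - M).det = 0 :=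
    exists_mulVec_eq_zero_iff.1 ⟨1, one_ne_zero, by rw [sub_mulVec, hM, one_mulVec, sub_self]⟩
  obtain ⟨v, hv, hvM⟩ := exists_vecMul_eq_zero_iff.2 hdet
  exact ⟨v, hv, by rwa [vecMul_sub, vecMul_one, sub_eq_zero, eq_comm] at hvM⟩

section Ordered

variable [Ring R] [LinearOrder R] [IsOrderedRing R]

theorem sum_vecMul_of_mem_rowStochastic (hM : M ∈ rowStochastic R n) (x : n → R) :
    ∑ j, (x ᵥ* M) j = ∑ i, x i := by
  rw [← dotProduct_one, ← dotProduct_one, ← dotProduct_mulVec, hM.2]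

theorem abs_vecMul_eq_abs_of_mem_rowStochastic (hM : M ∈ rowStochastic R n) {v : n → R}
    (hv : v ᵥ* M = v) : |v| ᵥ* M = |v| := by
  have hle : ∀ j, |v| j ≤ (|v| ᵥ* M) j := fun j => calc
    |v| j = |∑ i, v i * M i j| := by rw [Pi.abs_apply, ← congrFun hv j]; rfl
    _ ≤ ∑ i, |v i * M i j| := abs_sum_le_sum_abs _ _
    _ = (|v| ᵥ* M) j := by
      simp only [vecMul, dotProduct, abs_mul, abs_of_nonneg (hM.1 _ _), Pi.abs_apply]
  funext j
  exact ((sum_eq_sum_iff_of_le fun j _ => hle j).1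
    (sum_vecMul_of_mem_rowStochastic hM _).symm j (mem_univ j)).symm

end Ordered

theorem exists_mem_stdSimplex_vecMul_eq_self [Field R] [LinearOrder R] [IsStrictOrderedRing R]
    [Nonempty n] (hM : M ∈ rowStochastic R n) : ∃ π ∈ stdSimplex R n, π ᵥ* M = π := by
  obtain ⟨v, hv, hvM⟩ := exists_ne_zero_vecMul_eq_self hM.2
  have hsum : 0 < ∑ i, |v i| := by
    obtain ⟨i, hi⟩ := Function.ne_iff.1 hv
    exact sum_pos' (fun i _ => abs_nonneg (v i)) ⟨i, mem_univ i, abs_pos.2 hi⟩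
  refine ⟨(∑ i, |v i|)⁻¹ • |v|, ⟨fun i => ?_, ?_⟩, ?_⟩
  · exact smul_nonneg (inv_nonneg.2 hsum.le) (abs_nonneg (v i))
  · simp only [Pi.smul_apply, Pi.abs_apply, smul_eq_mul, ← mul_sum]
    exact inv_mul_cancel₀ hsum.ne'
  · rw [smul_vecMul, abs_vecMul_eq_abs_of_mem_rowStochastic hM hvM]

end Matrix

theorem exists_stationary_distribution
    (m : ℕ) (hm : 1 ≤ m) (W : Matrix (Fin m) (Fin m) ℝ)
    (hnonneg : ∀ i j, 0 ≤ W i j) (hrow : ∀ i, ∑ j, W i j = 1) :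
    ∃ π : Fin m → ℝ, (∀ i, 0 ≤ π i) ∧ (∑ i, π i = 1) ∧
      (∀ j, ∑ i, π i * W i j = π j) := by
  have : NeZero m := ⟨by omega⟩
  obtain ⟨π, ⟨hπ_nonneg, hπ_sum⟩, hπW⟩ := Matrix.exists_mem_stdSimplex_vecMul_eq_self
    (Matrix.mem_rowStochastic_iff_sum.2 ⟨hnonneg, hrow⟩)
  exact ⟨π, hπ_nonneg, hπ_sum, congrFun hπW⟩
end

section
/- Let n ≥ 1, let x : Fin n → ℝ, let μ̂ = (1/n) ∑_i x i be the sample mean, and let S = ∑_i (x i − μ̂)², assumed positive (the samples are not all equal). Then the function v ↦ ∑_i log(gaussianPDFReal μ̂ v (x i)) on v ∈ (0, ∞) attains its unique global maximum at the maximum-likelihood variance v = S/n. -/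
open ProbabilityTheory Real

lemma loglik (μhat : ℝ) (n : ℕ) (x : Fin n → ℝ) (S : ℝ) (hS : S = ∑ i, (x i - μhat) ^ 2)
    (v : NNReal) (hv : 0 < (v:ℝ)) :
    ∑ i, Real.log (gaussianPDFReal μhat v (x i))
      = -(n:ℝ) * Real.log (Real.sqrt (2 * π * v)) - S / (2 * v) := by
  have h2v : (0:ℝ) < 2 * π * v := by positivity
  have : ∀ i : Fin n, Real.log (gaussianPDFReal μhat v (x i))
      = -Real.log (Real.sqrt (2 * π * v)) - (x i - μhat)^2 / (2 * v) := by
    intro i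
    rw [gaussianPDFReal, Real.log_mul (by positivity) (Real.exp_pos _).ne',
      Real.log_inv, Real.log_exp]
    ring
  rw [Finset.sum_congr rfl fun i _ => this i, Finset.sum_sub_distrib, hS,
    ← Finset.sum_div]
  simp [Finset.sum_const, mul_comm]

theorem mle_variance_unique_max
    (n : ℕ) (hn : 1 ≤ n) (x : Fin n → ℝ)
    (μhat : ℝ) (hμhat : μhat = (1 / (n : ℝ)) * ∑ i, x i)
    (S : ℝ) (hS : S = ∑ i, (x i - μhat) ^ 2) (hSpos : 0 < S) :
    ∀ v : NNReal, 0 < v → (v : ℝ) ≠ S / n →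
      ∑ i, Real.log (gaussianPDFReal μhat v (x i)) <
        ∑ i, Real.log (gaussianPDFReal μhat (Real.toNNReal (S / n)) (x i)) := by
  intro v hv hne
  have hn' : (0:ℝ) < n := by exact_mod_cast hn
  set w : ℝ := S / n with hwdef
  have hw : 0 < w := div_pos hSpos hn'
  have hvt : (0:ℝ) < (v:ℝ) := by exact_mod_cast hv
  have hcw : ((Real.toNNReal w : NNReal) : ℝ) = w := Real.coe_toNNReal _ hw.le
  rw [loglik μhat n x S hS v hvt, loglik μhat n x S hS _ (by rw [hcw]; exact hw), hcw]
  set t : ℝ := (v:ℝ) with htdef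
  have hSw : S = n * w := by rw [hwdef]; field_simp
  have hratio : w / t ≠ 1 := by
    intro h
    exact hne (by field_simp at h; linarith)
  have key : Real.log (w / t) < w / t - 1 :=
    Real.log_lt_sub_one_of_pos (by positivity) hratio
  have hlog : Real.log (w / t) = Real.log w - Real.log t := Real.log_div hw.ne' hvt.ne'
  have key2 : (0:ℝ) < Real.log t - Real.log w + (w / t - 1) := by nlinarith
  have e1 : Real.log (Real.sqrt (2 * π * t)) = (Real.log (2 * π) + Real.log t) / 2 := by
    rw [Real.log_sqrt (by positivity), Real.log_mul (by positivity) hvt.ne']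
  have e2 : Real.log (Real.sqrt (2 * π * w)) = (Real.log (2 * π) + Real.log w) / 2 := by
    rw [Real.log_sqrt (by positivity), Real.log_mul (by positivity) hw.ne']
  have e3 : S / (2 * t) = (n / 2) * (w / t) := by rw [hSw]; ring
  have e4 : S / (2 * w) = n / 2 := by rw [hSw]; field_simp
  rw [e1, e2, e3, e4]
  nlinarith [mul_pos (by positivity : (0:ℝ) < (n:ℝ)/2) key2]
end

section
/- Let n ≥ 1, let x : Fin n → ℝ, let μ̂ = (1/n) ∑_i x i and S = ∑_i (x i − μ̂)², with S > 0. Then for every μ ∈ ℝ and v ∈ (0, ∞) with (μ, v) ≠ (μ̂, S/n), the Gaussian log-likelihood satisfies ∑_i log(gaussianPDFReal μ v (x i)) < ∑_i log(gaussianPDFReal μ̂ (S/n) (x i)); that is, the pair (sample mean, S/n) is the unique joint maximum-likelihood estimate of the Gaussian parameters. -/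
open ProbabilityTheory Real

lemma log_gauss (μ : ℝ) (v : NNReal) (hv : 0 < (v:ℝ)) (y : ℝ) :
    Real.log (gaussianPDFReal μ v y)
      = -(Real.log (2 * Real.pi * v)) / 2 - (y - μ)^2 / (2 * v) := by
  have h2 : (0:ℝ) < 2 * Real.pi * v := by positivity
  rw [gaussianPDFReal, Real.log_mul (by positivity) (Real.exp_ne_zero _),
    Real.log_inv, Real.log_sqrt h2.le, Real.log_exp]
  ring

lemma sum_sq_decomp (n : ℕ) (x : Fin n → ℝ) (μhat μ : ℝ)
    (hmean : ∑ i, x i = n * μhat) :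
    ∑ i, (x i - μ)^2 = (∑ i, (x i - μhat)^2) + n * (μ - μhat)^2 := by
  have : ∀ i, (x i - μ)^2 = (x i - μhat)^2 + 2*(μhat - μ)*(x i) + (μ^2 - μhat^2) - 2*(μhat-μ)*μhat + 2*(μhat-μ)*μhat := by
    intro i; ring
  calc ∑ i, (x i - μ)^2
      = ∑ i, ((x i - μhat)^2 + (2*(μhat - μ)*(x i)) + (μ^2 - μhat^2)) := by
        apply Finset.sum_congr rfl; intro i _; ring
    _ = (∑ i, (x i - μhat)^2) + 2*(μhat-μ) * (∑ i, x i) + n * (μ^2 - μhat^2) := by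
        rw [Finset.sum_add_distrib, Finset.sum_add_distrib, ← Finset.mul_sum,
          Finset.sum_const, Finset.card_fin]; ring
    _ = (∑ i, (x i - μhat)^2) + n * (μ - μhat)^2 := by rw [hmean]; ring

lemma core (n S vr Δ : ℝ) (hn : 0 < n) (hS : 0 < S) (hv : 0 < vr)
    (hne : Δ ≠ 0 ∨ vr ≠ S / n) :
    -(n/2) * Real.log vr - (S + n*Δ^2)/(2*vr)
      < -(n/2) * Real.log (S/n) - S/(2*(S/n)) := by
  set v0 : ℝ := S / n with hv0def
  have hv0 : 0 < v0 := by positivity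
  set t : ℝ := v0 / vr with htdef
  have ht : 0 < t := by positivity
  have hlogt : Real.log t = Real.log v0 - Real.log vr := Real.log_div hv0.ne' hv.ne'
  have htv : t * vr = v0 := by rw [htdef, div_mul_cancel₀ _ hv.ne']
  have hSn : S = n * v0 := by rw [hv0def, mul_div_cancel₀ _ hn.ne']
  have hS2 : S/(2*v0) = n/2 := by rw [hSn]; field_simp
  have hkey : (n/2) * (t - 1 - Real.log t) + n * Δ^2 / (2*vr) > 0 := by
    rcases hne with h | h
    · have h1 : Real.log t ≤ t - 1 := Real.log_le_sub_one_of_pos ht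
      have h2 : 0 < Δ^2 := by positivity
      have : 0 < n * Δ^2 / (2*vr) := by positivity
      nlinarith
    · have ht1 : t ≠ 1 := by
        intro h1
        apply h
        have : vr = v0 := by
          have := htv; rw [h1] at this; linarith
        exact this
      have h1 : Real.log t < t - 1 := Real.log_lt_sub_one_of_pos ht ht1
      have h2 : 0 ≤ Δ^2 := sq_nonneg _
      have : 0 ≤ n * Δ^2 / (2*vr) := by positivity
      nlinarith
  have hStv : S/(2*vr) = (n/2) * t := by
    rw [hSn, ← htv]; field_simp
  have expand : -(n/2) * Real.log (S/n) - S/(2*(S/n)) - (-(n/2) * Real.log vr - (S + n*Δ^2)/(2*vr))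
      = (n/2) * (t - 1 - Real.log t) + n * Δ^2 / (2*vr) := by
    have : (S + n*Δ^2)/(2*vr) = S/(2*vr) + n*Δ^2/(2*vr) := by ring
    rw [this, hStv, hS2, hlogt]; ring
  linarith [hkey, expand.ge, expand.le]

theorem mle_joint_unique_max
    (n : ℕ) (hn : 1 ≤ n) (x : Fin n → ℝ)
    (μhat : ℝ) (hμhat : μhat = (1 / (n : ℝ)) * ∑ i, x i)
    (S : ℝ) (hS : S = ∑ i, (x i - μhat) ^ 2) (hSpos : 0 < S) :
    ∀ (μ : ℝ) (v : NNReal), 0 < v → (μ, (v : ℝ)) ≠ (μhat, S / n) →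
      ∑ i, Real.log (gaussianPDFReal μ v (x i)) <
        ∑ i, Real.log (gaussianPDFReal μhat (Real.toNNReal (S / n)) (x i)) := by
  intro μ v hv hne
  have hnpos : (0:ℝ) < n := by exact_mod_cast hn
  have hvr : (0:ℝ) < v := by exact_mod_cast hv
  have hv0 : (0:ℝ) < S / n := by positivity
  have hcoe : ((Real.toNNReal (S/n)) : ℝ) = S / n := Real.coe_toNNReal _ hv0.le
  have hv0pos : (0:ℝ) < ((Real.toNNReal (S/n)) : ℝ) := by rw [hcoe]; exact hv0
  have hmean : ∑ i, x i = n * μhat := by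
    rw [hμhat]; field_simp
  -- rewrite sums
  have hL : ∀ (m : ℝ) (w : NNReal), 0 < (w:ℝ) →
      ∑ i, Real.log (gaussianPDFReal m w (x i))
        = -((n:ℝ)/2) * Real.log (2 * Real.pi * w) - (∑ i, (x i - m)^2) / (2 * w) := by
    intro m w hw
    rw [Finset.sum_congr rfl (fun i _ => log_gauss m w hw (x i)),
      Finset.sum_sub_distrib, Finset.sum_const, Finset.card_fin, ← Finset.sum_div]
    ring
  rw [hL μ v hvr, hL μhat _ hv0pos, hcoe]
  have hdecomp := sum_sq_decomp n x μhat μ hmean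
  rw [hdecomp, ← hS]
  -- split log(2π w) = log(2π) + log w
  have hπ : (0:ℝ) < 2 * Real.pi := by positivity
  have hl1 : Real.log (2 * Real.pi * (v:ℝ)) = Real.log (2*Real.pi) + Real.log v :=
    Real.log_mul hπ.ne' hvr.ne'
  have hl2 : Real.log (2 * Real.pi * (S/n)) = Real.log (2*Real.pi) + Real.log (S/n) :=
    Real.log_mul hπ.ne' hv0.ne'
  rw [hl1, hl2]
  have hΔv : (μ - μhat) ≠ 0 ∨ (v:ℝ) ≠ S / n := by
    by_contra h
    push_neg at h
    exact hne (by rw [Prod.ext_iff]; constructor <;> simp [sub_eq_zero.mp h.1, h.2])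
  have := core n S v (μ - μhat) hnpos hSpos hvr hΔv
  have e1 : S + (n:ℝ) * (μ - μhat)^2 = S + n * (μ - μhat)^2 := rfl
  nlinarith [this]
end

section
/- Let n ≥ 1, let g : Fin n → ℝ with g i > 0 for all i, let P > 0, and let ν be a water level with ∑_i max(ν − 1/(g i), 0) = P. Define the water-filling allocation p* by p* i = max(ν − 1/(g i), 0). Then p* maximizes the sum rate: for every q : Fin n → ℝ with q i ≥ 0 for all i and ∑_i q i ≤ P, one has ∑_i log(1 + g i · q i) ≤ ∑_i log(1 + g i · p* i). -/
theorem waterfilling_maximizes_sum_rate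
    (n : ℕ) (hn : 1 ≤ n) (g : Fin n → ℝ) (hg : ∀ i, 0 < g i)
    (P : ℝ) (hP : 0 < P) (ν : ℝ)
    (hν : ∑ i, max (ν - 1 / g i) 0 = P)
    (pstar : Fin n → ℝ) (hpstar : ∀ i, pstar i = max (ν - 1 / g i) 0) :
    ∀ q : Fin n → ℝ, (∀ i, 0 ≤ q i) → ∑ i, q i ≤ P →
      ∑ i, Real.log (1 + g i * q i) ≤ ∑ i, Real.log (1 + g i * pstar i) := by
  intro q hq hqP
  have hν0 : 0 < ν := by
    by_contra h
    push_neg at h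
    have hz : ∑ i, max (ν - 1 / g i) 0 = 0 := by
      apply Finset.sum_eq_zero
      intro i _
      have hgi := hg i
      have h1 : 0 < 1 / g i := by positivity
      have : ν - 1 / g i ≤ 0 := by linarith
      exact max_eq_right this
    linarith
  have hsum : ∑ i, pstar i = P := by
    rw [← hν]
    exact Finset.sum_congr rfl fun i _ => hpstar i
  have key : ∀ i, Real.log (1 + g i * q i) - Real.log (1 + g i * pstar i)
      ≤ (q i - pstar i) / ν := by
    intro i
    have hgi := hg i
    have hp := hpstar i
    have hp0 : 0 ≤ pstar i := by rw [hp]; exact le_max_right _ _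
    have h1p : 0 < 1 + g i * pstar i := by nlinarith
    have h1q : 0 < 1 + g i * q i := by nlinarith [hq i]
    have hlog : Real.log (1 + g i * q i) - Real.log (1 + g i * pstar i)
        ≤ (1 + g i * q i) / (1 + g i * pstar i) - 1 := by
      rw [← Real.log_div (ne_of_gt h1q) (ne_of_gt h1p)]
      exact Real.log_le_sub_one_of_pos (by positivity)
    have hstep : (1 + g i * q i) / (1 + g i * pstar i) - 1
        = g i * (q i - pstar i) / (1 + g i * pstar i) := by
      field_simp
      ring
    rw [hstep] at hlog
    refine hlog.trans ?_
    by_cases hcase : 1 / g i ≤ ν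
    · have hpe : pstar i = ν - 1 / g i := by rw [hp, max_eq_left (by linarith)]
      have hden : 1 + g i * pstar i = g i * ν := by
        rw [hpe]; field_simp; ring
      rw [hden, mul_div_mul_left _ _ (ne_of_gt hgi)]
    · push_neg at hcase
      have hpe : pstar i = 0 := by
        rw [hp]
        have h1 : 0 < 1 / g i := by positivity
        exact max_eq_right (by linarith)
      have hgν : ν * g i < 1 := (lt_div_iff₀ hgi).mp hcase
      rw [hpe]
      simp only [mul_zero, add_zero, div_one, sub_zero]
      rw [le_div_iff₀ hν0]
      nlinarith [hq i]
  have hsumle : ∑ i, (Real.log (1 + g i * q i) - Real.log (1 + g i * pstar i))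
      ≤ ∑ i, (q i - pstar i) / ν :=
    Finset.sum_le_sum fun i _ => key i
  rw [Finset.sum_sub_distrib] at hsumle
  have : ∑ i, (q i - pstar i) / ν ≤ 0 := by
    rw [← Finset.sum_div, Finset.sum_sub_distrib, hsum]
    apply div_nonpos_of_nonpos_of_nonneg <;> linarith
  linarith
end
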